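/- The monic associated Hermite polynomials $H_n(x,c)$ defined by $H_n(x,c)=\sum_{k=0}^{\lfloor n/2\rfloor}(-2)^{-k}\frac{(c)_k (n-k)!}{k!(n-2k)!}H_{n-2k}(x)$ satisfy the three-term recurrence $xH_n(x,c)=H_{n+1}(x,c)+\frac{n+c}{2}H_{n-1}(x,c)$ for $n\ge 0$, with $H_{-1}(x,c)=0$ and $H_0(x,c)=1$. -/

import Mathlib

/-!
Since `(n-k)!/(k!(n-2k)!) = C(n-k, k)`, the coefficients are `a(n,k) = (-1/2)^k (c)_k C(n-k, k)`,
which vanish on their own for `2k > n`. Multiplying `H_n(x,c) = ∑ a(n,k) H_{n-2k}` by `x` with the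
Hermite recurrence and comparing coefficients of `H_{n-1-2k}` reduces the theorem to Pascal's rule
`C(l+1, k+1) = C(l, k) + C(l, k+1)` together with `(l+1-k) C(l+1, k) = (l+1) C(l, k)`.
-/

open Finset

noncomputable def poch (a : ℝ) (k : ℕ) : ℝ := ∏ i ∈ Finset.range k, (a + i)

noncomputable def hermiteM : ℕ → Polynomial ℝ
  | 0 => 1
  | 1 => Polynomial.X
  | (n + 2) => Polynomial.X * hermiteM (n + 1) - Polynomial.C (((n : ℝ) + 1) / 2) * hermiteM n

noncomputable def assocHermite (c : ℝ) (n : ℕ) : Polynomial ℝ :=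
  ∑ k ∈ Finset.range (n / 2 + 1),
    Polynomial.C ((-(1 : ℝ)/2) ^ k * poch c k * ((n - k).factorial : ℝ)
        / ((k.factorial : ℝ) * ((n - 2 * k).factorial : ℝ))) * hermiteM (n - 2 * k)

open Polynomial

lemma poch_succ (c : ℝ) (k : ℕ) : poch c (k + 1) = poch c k * (c + k) :=
  prod_range_succ _ _

lemma X_mul_hermiteM (m : ℕ) :
    X * hermiteM m = hermiteM (m + 1) + C ((m : ℝ) / 2) * hermiteM (m - 1) := by
  cases m with
  | zero => simp [hermiteM]
  | succ m =>
    rw [hermiteM, Nat.add_sub_cancel]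
    push_cast
    ring

noncomputable def assocHermiteCoeff (c : ℝ) (n k : ℕ) : ℝ :=
  (-(1 : ℝ) / 2) ^ k * poch c k * (n - k).choose k

lemma assocHermiteCoeff_zero_right (c : ℝ) (n : ℕ) : assocHermiteCoeff c n 0 = 1 := by
  simp [assocHermiteCoeff, poch]

lemma assocHermiteCoeff_eq_zero {c : ℝ} {n k : ℕ} (h : n < 2 * k) :
    assocHermiteCoeff c n k = 0 := by
  simp [assocHermiteCoeff, Nat.choose_eq_zero_of_lt (by omega : n - k < k)]

lemma assocHermite_eq_sum (c : ℝ) {n N : ℕ} (hN : n / 2 < N) :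
    assocHermite c n = ∑ k ∈ range N, C (assocHermiteCoeff c n k) * hermiteM (n - 2 * k) := by
  rw [assocHermite]
  refine sum_subset_zero_on_sdiff (range_subset_range.2 hN) (fun k hk => ?_) (fun k hk => ?_)
  · rw [mem_sdiff, mem_range, mem_range] at hk
    rw [assocHermiteCoeff_eq_zero (by omega), C_0, zero_mul]
  · have hk : 2 * k ≤ n := by rw [mem_range] at hk; omega
    rw [assocHermiteCoeff, Nat.cast_choose ℝ (by omega : k ≤ n - k),
      show n - k - k = n - 2 * k by omega, mul_div_assoc]

lemma X_mul_assocHermiteCoeff_mul_hermiteM (c : ℝ) (n k : ℕ) :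
    X * (C (assocHermiteCoeff c n k) * hermiteM (n - 2 * k))
      = C (assocHermiteCoeff c n k) * hermiteM (n + 1 - 2 * k)
        + C (assocHermiteCoeff c n k * ((n - 2 * k : ℕ) : ℝ) / 2) * hermiteM (n - 2 * k - 1) := by
  rcases le_or_gt (2 * k) n with hk | hk
  · rw [mul_left_comm, X_mul_hermiteM, show n - 2 * k + 1 = n + 1 - 2 * k by omega, mul_div_assoc,
      C_mul]
    ring
  · simp [assocHermiteCoeff_eq_zero hk]

lemma assocHermiteCoeff_recurrence (c : ℝ) {n k : ℕ} (hk : k < n) :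
    assocHermiteCoeff c n (k + 1) + assocHermiteCoeff c n k * ((n - 2 * k : ℕ) : ℝ) / 2
      = assocHermiteCoeff c (n + 1) (k + 1)
        + ((n : ℝ) + c) / 2 * assocHermiteCoeff c (n - 1) k := by
  obtain ⟨l, rfl⟩ := Nat.exists_eq_add_of_lt hk
  have pascal : ((l + 1).choose (k + 1) : ℝ) = l.choose k + l.choose (k + 1) := by
    exact_mod_cast Nat.choose_succ_succ' l k
  have absorb : ((l + 1).choose k : ℝ) * ((l + 1 - k : ℕ) : ℝ) = l.choose k * (l + 1) := by
    exact_mod_cast (Nat.choose_mul_succ_eq l k).symm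
  simp only [assocHermiteCoeff, poch_succ, show k + l + 1 - (k + 1) = l by omega,
    show k + l + 1 - k = l + 1 by omega, show k + l + 1 + 1 - (k + 1) = l + 1 by omega,
    show k + l + 1 - 1 - k = l by omega, show k + l + 1 - 2 * k = l + 1 - k by omega]
  rw [pascal]
  push_cast
  linear_combination (-(1 : ℝ) / 2) ^ k * poch c k / 2 * absorb

lemma assocHermite_succ (c : ℝ) (n : ℕ) :
    assocHermite c (n + 1)
      = hermiteM (n + 1)
        + ∑ k ∈ range n, C (assocHermiteCoeff c (n + 1) (k + 1)) * hermiteM (n - 2 * k - 1) := by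
  rw [assocHermite_eq_sum c (by omega : (n + 1) / 2 < n + 1), sum_range_succ', add_comm,
    assocHermiteCoeff_zero_right, C_1, one_mul]
  congr 1
  exact sum_congr rfl fun k _ => by rw [show n + 1 - 2 * (k + 1) = n - 2 * k - 1 by omega]

lemma X_mul_assocHermite (c : ℝ) (n : ℕ) :
    X * assocHermite c n
      = hermiteM (n + 1) + ∑ k ∈ range n,
          C (assocHermiteCoeff c n (k + 1) + assocHermiteCoeff c n k * ((n - 2 * k : ℕ) : ℝ) / 2)
            * hermiteM (n - 2 * k - 1) := by
  rw [assocHermite_eq_sum c (by omega : n / 2 < n + 1), mul_sum,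
    sum_congr rfl fun k _ => X_mul_assocHermiteCoeff_mul_hermiteM c n k, sum_add_distrib,
    sum_range_succ', sum_range_succ _ n, show n - 2 * n = 0 by omega, assocHermiteCoeff_zero_right]
  simp only [Nat.cast_zero, mul_zero, zero_div, C_0, zero_mul, add_zero, C_1, one_mul, Nat.sub_zero,
    C_add, add_mul, sum_add_distrib, show ∀ k, n + 1 - 2 * (k + 1) = n - 2 * k - 1 by omega]
  ring

/-- The associated Hermite polynomials satisfy
`x H_n(x,c) = H_{n+1}(x,c) + ((n+c)/2) H_{n-1}(x,c)` for `n ≥ 0`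
(with `H_{-1}(x,c) = 0`), and `H_0(x,c) = 1`. -/
theorem stmt11 (c : ℝ) :
    assocHermite c 0 = 1 ∧
    ∀ n : ℕ,
      Polynomial.X * assocHermite c n
        = assocHermite c (n + 1)
          + Polynomial.C (((n : ℝ) + c) / 2) *
              (if n = 0 then 0 else assocHermite c (n - 1)) := by
  refine ⟨by simp [assocHermite, poch, hermiteM], fun n => ?_⟩
  rw [X_mul_assocHermite, assocHermite_succ, add_assoc]
  rcases Nat.eq_zero_or_pos n with rfl | hn
  · simp
  rw [if_neg hn.ne', assocHermite_eq_sum c (by omega : (n - 1) / 2 < n), mul_sum, ← sum_add_distrib]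
  congr 1
  refine sum_congr rfl fun k hk => ?_
  rw [assocHermiteCoeff_recurrence c (mem_range.1 hk), C_add, add_mul, C_mul, mul_assoc,
    show n - 1 - 2 * k = n - 2 * k - 1 by omega]
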